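/- arXiv:1412.8205 — 2 statements merged into one kernel-verified Lean document; each statement's English description precedes it below -/
import Mathlib

section
/- For every positive integer d, the number of subgroups of the abelian group ℤ × ℤ of index d is σ(d) = ∑_{r ∣ d} r; that is, the set of subgroups H ≤ ℤ × ℤ whose index equals d is finite and has cardinality σ(d). -/
/-!
Every subgroup `H` of finite index in `ℤ × ℤ` has a unique basis in Hermite normal form
`(a, 0), (b, c)` with `a, c > 0` and `0 ≤ b < a`: here `aℤ` is the intersection of `H` with the
first axis, `cℤ` is the projection of `H` to the second axis, and `b` is the residue mod `a` of the
first coordinate of any element of `H` lying over `c`. The index of `H` is `a * c`, so the subgroups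
of index `d` are counted by `∑_{a c = d} a = σ(d)`.
-/

open AddSubgroup

theorem AddMonoidHom.range_inl_eq_ker_snd (M N : Type*) [AddGroup M] [AddGroup N] :
    (AddMonoidHom.inl M N).range = (AddMonoidHom.snd M N).ker := by
  ext ⟨x, y⟩
  simp [mem_prod, eq_comm]

theorem AddSubgroup.index_eq_index_comap_mul_index_map {G G' G'' : Type*} [AddGroup G]
    [AddGroup G'] [AddGroup G''] (H : AddSubgroup G) [H.Normal] {f : G →+ G'}
    (hf : Function.Surjective f) {g : G'' →+ G} (hgf : g.range = f.ker) :
    H.index = (H.comap g).index * (H.map f).index := by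
  rw [← H.relIndex_mul_index (le_sup_right : H ≤ f.ker ⊔ H), relIndex_sup_right, index_comap, hgf,
    sup_comm, ← comap_map_eq, index_comap_of_surjective _ hf]

theorem Int.zmultiples_index (A : AddSubgroup ℤ) : zmultiples (A.index : ℤ) = A := by
  obtain ⟨a, rfl⟩ := Int.subgroup_cyclic A
  rw [← zmultiples_eq_closure, index_zmultiples, Int.zmultiples_natAbs]

def hnfLattice (a b c : ℤ) : AddSubgroup (ℤ × ℤ) :=
  zmultiples (a, 0) ⊔ zmultiples (b, c)

theorem mem_hnfLattice {a b c x y : ℤ} :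
    (x, y) ∈ hnfLattice a b c ↔ ∃ m n : ℤ, m * a + n * b = x ∧ n * c = y := by
  simp only [hnfLattice, mem_sup, mem_zmultiples_iff]
  constructor
  · rintro ⟨_, ⟨m, rfl⟩, _, ⟨n, rfl⟩, h⟩
    exact ⟨m, n, by simpa using congrArg Prod.fst h, by simpa using congrArg Prod.snd h⟩
  · rintro ⟨m, n, rfl, rfl⟩
    exact ⟨_, ⟨m, rfl⟩, _, ⟨n, rfl⟩, by simp⟩

theorem comap_inl_hnfLattice {a c : ℤ} (b : ℤ) (hc : c ≠ 0) :
    (hnfLattice a b c).comap (AddMonoidHom.inl ℤ ℤ) = zmultiples a := by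
  ext x
  simp only [mem_comap, AddMonoidHom.inl_apply, mem_hnfLattice, Int.mem_zmultiples_iff]
  constructor
  · rintro ⟨m, n, rfl, hn⟩
    obtain rfl : n = 0 := by simpa [hc] using hn
    simp
  · rintro ⟨m, rfl⟩
    exact ⟨m, 0, by ring, by ring⟩

theorem map_snd_hnfLattice (a b c : ℤ) :
    (hnfLattice a b c).map (AddMonoidHom.snd ℤ ℤ) = zmultiples c := by
  simp [hnfLattice, AddSubgroup.map_sup, AddMonoidHom.map_zmultiples]

theorem index_hnfLattice {a c : ℤ} (b : ℤ) (hc : c ≠ 0) :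
    (hnfLattice a b c).index = a.natAbs * c.natAbs := by
  rw [(hnfLattice a b c).index_eq_index_comap_mul_index_map Prod.snd_surjective
    (AddMonoidHom.range_inl_eq_ker_snd ℤ ℤ), comap_inl_hnfLattice b hc, map_snd_hnfLattice,
    Int.index_zmultiples, Int.index_zmultiples]

theorem eq_hnfLattice {H : AddSubgroup (ℤ × ℤ)} {a b c : ℤ}
    (ha : H.comap (AddMonoidHom.inl ℤ ℤ) = zmultiples a)
    (hc : H.map (AddMonoidHom.snd ℤ ℤ) = zmultiples c) (hb : (b, c) ∈ H) :
    H = hnfLattice a b c := by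
  have hinl : ∀ {x : ℤ}, (x, (0 : ℤ)) ∈ H ↔ a ∣ x := by
    intro x
    rw [← Int.mem_zmultiples_iff, ← ha]
    rfl
  refine le_antisymm ?_ (sup_le (zmultiples_le.mpr (hinl.mpr dvd_rfl)) (zmultiples_le.mpr hb))
  rintro ⟨x, y⟩ hxy
  obtain ⟨n, rfl⟩ : c ∣ y := by
    rw [← Int.mem_zmultiples_iff, ← hc]
    exact ⟨_, hxy, rfl⟩
  obtain ⟨m, hm⟩ : a ∣ x - n * b := hinl.mp <| by
    simpa [mul_comm] using H.sub_mem hxy (H.zsmul_mem hb n)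
  exact mem_hnfLattice.mpr ⟨m, n, by linarith, mul_comm n c⟩

theorem exists_hnfLattice_eq (H : AddSubgroup (ℤ × ℤ)) (hH : H.index ≠ 0) :
    ∃ a c b : ℕ, 0 < c ∧ b < a ∧ H = hnfLattice a b c := by
  set a := (H.comap (AddMonoidHom.inl ℤ ℤ)).index
  set c := (H.map (AddMonoidHom.snd ℤ ℤ)).index
  have hac : a * c ≠ 0 := by
    rwa [← H.index_eq_index_comap_mul_index_map Prod.snd_surjective
      (AddMonoidHom.range_inl_eq_ker_snd ℤ ℤ)]
  have ha : (0 : ℤ) < a := by exact_mod_cast Nat.pos_of_ne_zero (left_ne_zero_of_mul hac)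
  have hA := Int.zmultiples_index (H.comap (AddMonoidHom.inl ℤ ℤ))
  have hC := Int.zmultiples_index (H.map (AddMonoidHom.snd ℤ ℤ))
  obtain ⟨⟨b₀, _⟩, hb₀, rfl⟩ : (c : ℤ) ∈ H.map (AddMonoidHom.snd ℤ ℤ) :=
    hC ▸ mem_zmultiples _
  have hb : (b₀ % a, (c : ℤ)) ∈ H := by
    have hdiv : ((a : ℤ) * (b₀ / a), (0 : ℤ)) ∈ H := show _ ∈ H.comap (AddMonoidHom.inl ℤ ℤ) from
      hA ▸ Int.mem_zmultiples_iff.mpr (dvd_mul_right _ _)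
    simpa [Int.emod_def] using H.sub_mem hb₀ hdiv
  have hb_nonneg := Int.emod_nonneg b₀ ha.ne'
  refine ⟨a, c, (b₀ % a).toNat, Nat.pos_of_ne_zero (right_ne_zero_of_mul hac), ?_, ?_⟩
  · have := Int.emod_lt_of_pos b₀ ha
    omega
  · rw [Int.toNat_of_nonneg hb_nonneg]
    exact eq_hnfLattice hA.symm hC.symm hb

theorem eq_of_hnfLattice_eq {a a' b b' c c' : ℕ} (hc : 0 < c) (hc' : 0 < c') (hb : b < a)
    (hb' : b' < a') (h : hnfLattice a b c = hnfLattice a' b' c') :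
    a = a' ∧ c = c' ∧ b = b' := by
  obtain rfl : a = a' := by
    simpa [comap_inl_hnfLattice, hc.ne', hc'.ne'] using
      congrArg (fun L => (L.comap (AddMonoidHom.inl ℤ ℤ)).index) h
  obtain rfl : c = c' := by
    simpa [map_snd_hnfLattice] using congrArg (fun L => (L.map (AddMonoidHom.snd ℤ ℤ)).index) h
  refine ⟨rfl, rfl, ?_⟩
  have hmem : ((b : ℤ), (c : ℤ)) ∈ hnfLattice a b' c :=
    h ▸ mem_hnfLattice.mpr ⟨0, 1, by ring, by ring⟩
  obtain ⟨m, n, hx, hy⟩ := mem_hnfLattice.mp hmem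
  obtain rfl : n = 1 := Int.eq_one_of_mul_eq_self_left (by positivity) hy
  have hdvd : (a : ℤ) ∣ b - b' := ⟨m, by linarith⟩
  have : (b : ℤ) - b' = 0 :=
    Int.eq_zero_of_abs_lt_dvd hdvd (abs_sub_lt_iff.mpr ⟨by omega, by omega⟩)
  omega

theorem bijOn_hnfLattice {d : ℕ} (hd : d ≠ 0) :
    Set.BijOn (fun t : (_ : ℕ × ℕ) × ℕ => hnfLattice t.1.1 t.2 t.1.2)
      (d.divisorsAntidiagonal.sigma fun p => Finset.range p.1) {H | H.index = d} := by
  refine ⟨?_, ?_, ?_⟩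
  · rintro ⟨⟨a, c⟩, b⟩ ht
    simp only [Finset.coe_sigma, Set.mem_sigma_iff, Finset.mem_coe,
      Nat.mem_divisorsAntidiagonal] at ht
    obtain ⟨⟨rfl, hac⟩, -⟩ := ht
    simp [index_hnfLattice, right_ne_zero_of_mul hac]
  · rintro ⟨⟨a, c⟩, b⟩ ht ⟨⟨a', c'⟩, b'⟩ ht' h
    simp only [Finset.coe_sigma, Set.mem_sigma_iff, Finset.mem_coe,
      Nat.mem_divisorsAntidiagonal, Finset.mem_range] at ht ht'
    obtain ⟨⟨rfl, hac⟩, hb⟩ := ht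
    obtain ⟨⟨hac', -⟩, hb'⟩ := ht'
    obtain ⟨rfl, rfl, rfl⟩ := eq_of_hnfLattice_eq (Nat.pos_of_ne_zero (right_ne_zero_of_mul hac))
      (Nat.pos_of_ne_zero (right_ne_zero_of_mul (hac' ▸ hac))) hb hb' h
    rfl
  · rintro H (rfl : H.index = d)
    obtain ⟨a, c, b, hc, hb, rfl⟩ := exists_hnfLattice_eq H hd
    refine ⟨⟨(a, c), b⟩, ?_, rfl⟩
    simpa [index_hnfLattice, hc.ne'] using ⟨by omega, hb⟩

/-- For every positive integer `d`, the set of subgroups of `ℤ × ℤ` of index `d`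
is finite and has cardinality `σ(d) = ∑_{r ∣ d} r`. -/
theorem index_d_subgroups_of_Z2_card (d : ℕ) (hd : 0 < d) :
    {H : AddSubgroup (ℤ × ℤ) | H.index = d}.Finite ∧
    {H : AddSubgroup (ℤ × ℤ) | H.index = d}.ncard = ∑ r ∈ d.divisors, r := by
  have hΦ := bijOn_hnfLattice hd.ne'
  rw [← hΦ.image_eq]
  refine ⟨(Finset.finite_toSet _).image _, ?_⟩
  rw [hΦ.injOn.ncard_image, Set.ncard_coe_finset, Finset.card_sigma]
  simpa using Nat.sum_divisorsAntidiagonal (fun a _ => a) (n := d)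
end

section
/- Let k be a field, let W be a finite-dimensional k-vector space of dimension d, let Θ : W → W be a linear automorphism (a linear equivalence of W with itself), let λ : W → k be a linear functional, and let κ ∈ W satisfy λ(κ) ≠ 0. Then for every natural number n there exists a natural number m with n ≤ m < n + d such that λ(Θ^m(κ)) ≠ 0. In particular, the set {m ∈ ℕ : λ(Θ^m(κ)) ≠ 0} is infinite. -/
/-!
The inverse of the invertible, integral element `Θ` of `End W` is a polynomial in `Θ`, hence so
is `Θ⁻ⁿ`; by Cayley–Hamilton every polynomial in `Θ` applied to `w` lies in the span of
`w, Θ w, …, Θ^(d-1) w`. Taking `w = Θⁿ κ` puts `κ` in the span of `Θⁿ κ, …, Θ^(n+d-1) κ`,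
so `l` cannot vanish on all of these vectors.
-/

open Polynomial

theorem Units.inv_mem_adjoin_of_isIntegral {K A : Type*} [Field K] [Ring A] [Algebra K A]
    (u : Aˣ) (hu : IsIntegral K (u : A)) : ((u⁻¹ : Aˣ) : A) ∈ Algebra.adjoin K {(u : A)} := by
  set B := Algebra.adjoin K {(u : A)}
  have : Module.Finite K B := Algebra.finite_adjoin_simple_of_isIntegral hu
  let b : B := ⟨u, Algebra.self_mem_adjoin_singleton K _⟩
  -- left multiplication by `u` on the finite-dimensional `K[u]` is injective, hence surjective
  have hinj : Function.Injective (LinearMap.mulLeft K b) := fun x y h => by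
    have h' : (u : A) * x = u * y := congrArg Subtype.val h
    exact Subtype.ext (u.mul_right_inj.mp h')
  obtain ⟨c, hc⟩ := LinearMap.injective_iff_surjective.mp hinj 1
  have : (u : A) * c = 1 := congrArg Subtype.val hc
  rw [← u.eq_inv_of_mul_eq_one_left this]
  exact c.2

theorem Module.End.aeval_apply_mem_span_pow_apply {R M : Type*} [CommRing R] [Nontrivial R]
    [AddCommGroup M] [Module R M] [Module.Free R M] [Module.Finite R M]
    (f : Module.End R M) (p : R[X]) (v : M) :
    aeval f p v ∈ Submodule.span R ((fun i => (f ^ i) v) '' Set.Iio (Module.finrank R M)) := by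
  classical
  have hdeg : p %ₘ f.charpoly ∈ degreeLT R (Module.finrank R M) := by
    rw [mem_degreeLT, ← f.charpoly_natDegree, ← degree_eq_natDegree f.charpoly_monic.ne_zero]
    exact degree_modByMonic_lt p f.charpoly_monic
  rw [degreeLT_eq_span_X_pow] at hdeg
  have := Submodule.mem_map_of_mem (f := LinearMap.applyₗ v ∘ₗ (aeval f).toLinearMap) hdeg
  rw [Submodule.map_span, Finset.coe_image, ← Set.image_comp] at this
  rw [f.aeval_eq_aeval_mod_charpoly]
  simpa using this

theorem LinearEquiv.exists_aeval_eq_symm {K M : Type*} [Field K] [AddCommGroup M] [Module K M]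
    [FiniteDimensional K M] (Θ : M ≃ₗ[K] M) :
    ∃ p : K[X], aeval (Θ : Module.End K M) p = Θ.symm := by
  have := (LinearMap.GeneralLinearGroup.ofLinearEquiv Θ).inv_mem_adjoin_of_isIntegral
    (LinearMap.isIntegral _)
  rwa [Algebra.adjoin_singleton_eq_range_aeval] at this

theorem LinearEquiv.mem_span_pow_add_apply {K M : Type*} [Field K] [AddCommGroup M] [Module K M]
    [FiniteDimensional K M] (Θ : M ≃ₗ[K] M) (n : ℕ) (v : M) :
    v ∈ Submodule.span K ((fun i => (Θ ^ (n + i)) v) '' Set.Iio (Module.finrank K M)) := by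
  obtain ⟨p, hp⟩ := Θ.exists_aeval_eq_symm
  have hv : aeval (Θ : Module.End K M) (p ^ n) ((Θ ^ n) v) = v := by
    rw [map_pow, hp, Module.End.pow_apply, LinearEquiv.pow_apply]
    exact Function.LeftInverse.iterate Θ.symm_apply_apply n v
  have hpow (i : ℕ) : ((Θ : Module.End K M) ^ i) ((Θ ^ n) v) = (Θ ^ (n + i)) v := by
    rw [Module.End.pow_apply, LinearEquiv.pow_apply, LinearEquiv.pow_apply, add_comm,
      Function.iterate_add_apply]
    rfl
  have := Module.End.aeval_apply_mem_span_pow_apply (Θ : Module.End K M) (p ^ n) ((Θ ^ n) v)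
  rwa [hv, funext hpow] at this

/-- If `W` is a `d`-dimensional vector space, `Θ` a linear automorphism of `W`,
`l` a linear functional, and `l κ ≠ 0`, then every window of `d` consecutive
exponents contains some `m` with `l (Θ^m κ) ≠ 0`; in particular the set of such
`m` is infinite. -/
theorem nonzero_in_every_window (k : Type*) [Field k] (W : Type*) [AddCommGroup W]
    [Module k W] [FiniteDimensional k W] (Θ : W ≃ₗ[k] W) (l : W →ₗ[k] k) (κ : W)
    (hκ : l κ ≠ 0) :
    (∀ n : ℕ, ∃ m : ℕ, n ≤ m ∧ m < n + Module.finrank k W ∧ l ((Θ ^ m) κ) ≠ 0) ∧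
    {m : ℕ | l ((Θ ^ m) κ) ≠ 0}.Infinite := by
  have window (n : ℕ) : ∃ m, n ≤ m ∧ m < n + Module.finrank k W ∧ l ((Θ ^ m) κ) ≠ 0 := by
    by_contra! hzero
    have hspan : Submodule.span k ((fun i => (Θ ^ (n + i)) κ) '' Set.Iio (Module.finrank k W))
        ≤ LinearMap.ker l := by
      rw [Submodule.span_le]
      rintro _ ⟨i, hi, rfl⟩
      exact hzero _ (Nat.le_add_right n i) (Nat.add_lt_add_left hi n)
    exact hκ (hspan (Θ.mem_span_pow_add_apply n κ))
  refine ⟨window, Set.infinite_of_not_bddAbove fun ⟨N, hN⟩ => ?_⟩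
  obtain ⟨m, hm, -, hne⟩ := window (N + 1)
  exact absurd (hN hne) (by omega)
end
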